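/- arXiv:0811.2562 — 3 statements merged into one kernel-verified Lean document; each statement's English description precedes it below -/
import Mathlib

section
/- Let w = v_1 v_2 ... v_n be a word in n distinct variables and define ψ_w = 1/((x_{v_1}-x_{v_2})(x_{v_2}-x_{v_3})...(x_{v_{n-1}}-x_{v_n})). Then the sum of ψ_w over all n! permutations w of {1,...,n} equals 0 for n ≥ 2. -/
open scoped BigOperators

/-- The field of rational functions in variables indexed by `V` over `ℚ`. -/
abbrev K (V : Type) : Type := FractionRing (MvPolynomial V ℚ)

/-- The variable `x_v` seen inside the field of rational functions. -/
noncomputable def xv {V : Type} (v : V) : K V :=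
  algebraMap (MvPolynomial V ℚ) (K V) (MvPolynomial.X v)

/-- `ψ_w = 1 / ∏ (x_{w_i} - x_{w_{i+1}})` for a word `w`. -/
noncomputable def psi {V : Type} (w : List V) : K V :=
  (((w.zip w.tail).map fun p => xv p.1 - xv p.2).prod)⁻¹

/-- The word (list of vertices) associated to an enumeration `σ` of the vertex set `W`. -/
def wordOf {V : Type} (W : Finset V) (σ : Fin W.card ≃ W) : List V :=
  (List.finRange W.card).map fun i => ((σ i : W) : V)

/-- `σ` enumerates `W` in an order compatible with all edges of `E`:
the origin of every edge appears before its end. -/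
def IsExt {V : Type} (W : Finset V) (E : Finset (V × V)) (σ : Fin W.card ≃ W) : Prop :=
  ∀ e ∈ E, ∃ i j : Fin W.card, i < j ∧ ((σ i : W) : V) = e.1 ∧ ((σ j : W) : V) = e.2

instance {V : Type} [DecidableEq V] (W : Finset V) (E : Finset (V × V)) (σ : Fin W.card ≃ W) :
    Decidable (IsExt W E σ) := by unfold IsExt; exact inferInstance

/-- `Ψ(G) = Σ_{w ∈ L(G)} ψ_w`, the sum over linear extensions of the graph with
vertex set `W` and edge set `E`. -/
noncomputable def PsiG {V : Type} [DecidableEq V] (W : Finset V) (E : Finset (V × V)) : K V :=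
  ∑ σ : Fin W.card ≃ W, if IsExt W E σ then psi (wordOf W σ) else 0

/-- `N(G) = Ψ(G) ⬝ ∏_{(a,b) ∈ E} (x_a - x_b)`. -/
noncomputable def NG {V : Type} [DecidableEq V] (W : Finset V) (E : Finset (V × V)) : K V :=
  PsiG W E * ∏ e ∈ E, (xv e.1 - xv e.2)

/-- `φ(G)`, the formal sum of the linear extensions of `G` in the free abelian
group on words. -/
noncomputable def phiG {V : Type} [DecidableEq V] (W : Finset V) (E : Finset (V × V)) :
    List V →₀ ℤ :=
  ∑ σ : Fin W.card ≃ W, if IsExt W E σ then Finsupp.single (wordOf W σ) 1 else 0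

/-- The graph has no directed circuit. -/
def Acyclic {V : Type} (E : Finset (V × V)) : Prop :=
  ∀ v : V, ¬ Relation.TransGen (fun a b => (a, b) ∈ E) v v

/-- The underlying undirected simple graph of the directed graph with edge set `E`. -/
def undirected {V : Type} (E : Finset (V × V)) : SimpleGraph V :=
  SimpleGraph.fromRel fun a b => (a, b) ∈ E

/-- The cyclically-consecutive pairs of a list of vertices. -/
def cyclePairs {V : Type} [DecidableEq V] (vs : List V) : Finset (V × V) :=
  Finset.image (fun i : Fin vs.length => (vs.get i, vs.get (finRotate _ i))) Finset.univ

/-- `vs` is (the vertex list of) a cycle of the graph `E`, whose set of forward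
edges (edges traversed in their graph orientation) is `HE`. -/
def IsCycle {V : Type} [DecidableEq V] (E : Finset (V × V)) (vs : List V)
    (HE : Finset (V × V)) : Prop :=
  2 ≤ vs.length ∧ vs.Nodup ∧ HE ⊆ cyclePairs vs ∧ HE ⊆ E ∧
    ∀ p ∈ cyclePairs vs, p ∉ HE → (p.2, p.1) ∈ E

/-!
Split a permutation word as its first letter `c` inserted somewhere into a word `a :: l` of the
remaining letters. For fixed `b :: l`, the partial-fraction identity
`1/((b-c)(c-a)) + 1/((b-a)(a-c)) = 1/((b-a)(b-c))` shows by induction on `l` that inserting `c`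
anywhere after `b` contributes `ψ_{b l} / (x_b - x_c)`. Adding the word `c a l` itself, with
`ψ_{c a l} = ψ_{a l} / (x_c - x_a)`, the insertions of `c` into `a :: l` cancel.
-/

lemma xv_injective {V : Type} : Function.Injective (xv : V → K V) :=
  (IsFractionRing.injective (MvPolynomial V ℚ) (K V)).comp MvPolynomial.X_injective

lemma psi_singleton {V : Type} (a : V) : psi [a] = 1 := by simp [psi]

lemma psi_cons_cons {V : Type} (a b : V) (l : List V) :
    psi (a :: b :: l) = (xv a - xv b)⁻¹ * psi (b :: l) := by
  simp [psi, mul_comm]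

lemma inv_sub_mul_inv_sub_add_inv_sub_mul_inv_sub {F : Type*} [Field F] {a b c : F}
    (hab : a ≠ b) (hbc : b ≠ c) (hca : c ≠ a) :
    (b - c)⁻¹ * (c - a)⁻¹ + (b - a)⁻¹ * (a - c)⁻¹ = (b - a)⁻¹ * (b - c)⁻¹ := by
  have := sub_ne_zero.2 hab; have := sub_ne_zero.2 hbc; have := sub_ne_zero.2 hca
  field_simp
  ring

lemma sum_psi_cons_permutations'Aux {V : Type} (c b : V) (l : List V)
    (h : (c :: b :: l).Nodup) :
    ((l.permutations'Aux c).map fun v => psi (b :: v)).sum = psi (b :: l) * (xv b - xv c)⁻¹ := by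
  induction l generalizing b with
  | nil =>
    simp [List.permutations'Aux, psi_cons_cons, psi_singleton]
  | cons a l ih =>
    simp only [List.nodup_cons, List.mem_cons, not_or] at h
    obtain ⟨⟨hcb, hca, hcl⟩, ⟨hba, hbl⟩, hal, hl⟩ := h
    have hrec := ih a (by simp_all)
    simp only [List.permutations'Aux, List.map_cons, List.map_map, List.sum_cons,
      Function.comp_def, psi_cons_cons b, List.sum_map_mul_left, hrec, psi_cons_cons c]
    linear_combination psi (a :: l) * inv_sub_mul_inv_sub_add_inv_sub_mul_inv_sub
      (xv_injective.ne (Ne.symm hba)) (xv_injective.ne (Ne.symm hcb)) (xv_injective.ne hca)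

lemma sum_psi_permutations'Aux_eq_zero {V : Type} (c a : V) (l : List V)
    (h : (c :: a :: l).Nodup) : (((a :: l).permutations'Aux c).map psi).sum = 0 := by
  have hca : xv c - xv a = -(xv a - xv c) := by ring
  simp only [List.permutations'Aux, List.map_cons, List.map_map, List.sum_cons, Function.comp_def,
    sum_psi_cons_permutations'Aux c a l h, psi_cons_cons c a l, hca, inv_neg]
  ring

lemma sum_psi_permutations'_eq_zero {V : Type} (l : List V) (hl : l.Nodup) (hlen : 2 ≤ l.length) :
    (l.permutations'.map psi).sum = 0 := by
  obtain ⟨c, t, rfl⟩ := List.exists_cons_of_length_pos (by omega : 0 < l.length)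
  rw [List.nodup_cons] at hl
  rw [List.permutations', List.map_flatMap, List.flatMap_def, List.sum_flatten, List.map_map]
  refine List.sum_eq_zero fun x hx => ?_
  obtain ⟨u, hu, rfl⟩ := List.mem_map.1 hx
  rw [List.mem_permutations'] at hu
  obtain ⟨a, l, rfl⟩ := List.exists_cons_of_length_pos
    (by rw [hu.length_eq]; rw [List.length_cons] at hlen; omega : 0 < u.length)
  exact sum_psi_permutations'Aux_eq_zero c a l
    (List.nodup_cons.2 ⟨fun hc => hl.1 (hu.mem_iff.1 hc), hu.nodup_iff.2 hl.2⟩)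

lemma sum_perm_map_finRange_eq_sum_permutations' {M : Type*} [AddCommMonoid M] (n : ℕ)
    (f : List (Fin n) → M) :
    ∑ σ : Equiv.Perm (Fin n), f ((List.finRange n).map σ) =
      ((List.finRange n).permutations'.map f).sum := by
  have hinj : Function.Injective fun σ : Equiv.Perm (Fin n) => (List.finRange n).map σ := by
    intro σ τ h
    simp only [← List.ofFn_eq_map] at h
    exact DFunLike.coe_injective (List.ofFn_injective h)
  have hnodup : (List.finRange n).permutations'.Nodup :=
    (List.permutations_perm_permutations' _).nodup_iff.1
      (List.nodup_permutations _ (List.nodup_finRange n))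
  have himage : Finset.univ.image (fun σ : Equiv.Perm (Fin n) => (List.finRange n).map σ) =
      (List.finRange n).permutations'.toFinset := by
    refine Finset.eq_of_subset_of_card_le (fun l hl => ?_) ?_
    · obtain ⟨σ, -, rfl⟩ := Finset.mem_image.1 hl
      simpa using σ.map_finRange_perm
    · rw [Finset.card_image_of_injective _ hinj, List.toFinset_card_of_nodup hnodup,
        ← (List.permutations_perm_permutations' _).length_eq, List.length_permutations,
        Finset.card_univ, Fintype.card_perm, Fintype.card_fin, List.length_finRange]
  rw [← List.sum_toFinset f hnodup, ← himage, Finset.sum_image fun σ _ τ _ h => hinj h]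

/-- the sum of `ψ_w` over all `n!` permutation words of `{1,…,n}`
vanishes for `n ≥ 2`. -/
theorem sum_psi_over_permutations_eq_zero (n : ℕ) (hn : 2 ≤ n) :
    ∑ σ : Equiv.Perm (Fin n), psi ((List.finRange n).map ⇑σ) = 0 := by
  rw [sum_perm_map_finRange_eq_sum_permutations']
  exact sum_psi_permutations'_eq_zero _ (List.nodup_finRange n) (by simpa using hn)
end

section
/- Let w = w_1 ... w_{n-1} be a word in distinct variables and fix an index k with 1 ≤ k ≤ n-1. Let v be a new variable. Then the sum of ψ_{w'} over all words w' obtained from w by inserting v after position i for i = k, ..., n-1 equals ψ_w / (x_{w_k} - x_v). -/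
open scoped BigOperators

noncomputable def prodw {V : Type} (w : List V) : K V :=
  ((w.zip w.tail).map fun p => xv p.1 - xv p.2).prod

lemma psi_eq {V : Type} (w : List V) : psi w = (prodw w)⁻¹ := rfl

lemma prodw_nil {V : Type} : prodw ([] : List V) = 1 := rfl

lemma prodw_single {V : Type} (a : V) : prodw [a] = 1 := rfl

lemma prodw_cons_cons {V : Type} (a b : V) (l : List V) :
    prodw (a :: b :: l) = (xv a - xv b) * prodw (b :: l) := by
  simp [prodw]

lemma xv_sub_ne_zero {V : Type} {a b : V} (h : a ≠ b) : xv a - xv b ≠ 0 := by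
  rw [sub_ne_zero]
  intro he
  exact h (MvPolynomial.X_injective (IsFractionRing.injective (MvPolynomial V ℚ) (K V) he))

lemma prodw_ne_zero {V : Type} : ∀ {w : List V}, w.Nodup → prodw w ≠ 0
  | [], _ => one_ne_zero
  | [a], _ => one_ne_zero
  | a :: b :: l, h => by
    rw [prodw_cons_cons]
    have h1 : a ≠ b := by simp_all
    exact mul_ne_zero (xv_sub_ne_zero h1) (prodw_ne_zero h.of_cons)

lemma prodw_split {V : Type} : ∀ (xs : List V) (y : V) (ys : List V),
    prodw (xs ++ y :: ys) = prodw (xs ++ [y]) * prodw (y :: ys)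
  | [], y, ys => by simp [prodw_single]
  | [x], y, ys => by simp [prodw_cons_cons, prodw_single]
  | x :: x' :: xs, y, ys => by
    have := prodw_split (x' :: xs) y ys
    simp only [List.cons_append] at *
    rw [prodw_cons_cons, this, prodw_cons_cons, mul_assoc]

lemma prodw_append_singleton {V : Type} (xs : List V) (h : xs ≠ []) (y : V) :
    prodw (xs ++ [y]) = prodw xs * (xv (xs.getLast h) - xv y) := by
  conv_lhs => rw [← List.dropLast_append_getLast h]
  rw [List.append_assoc, List.singleton_append, prodw_split,
    prodw_cons_cons, prodw_single, List.dropLast_append_getLast h, mul_one]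

lemma field_key' {F : Type*} [Field F] (Q P s t : F)
    (hst : s - t ≠ 0) (hs : s ≠ 0) (ht : t ≠ 0) :
    (Q * s * (-t * P))⁻¹ = (Q * (s - t) * P)⁻¹ * s⁻¹ - (Q * (s - t) * P)⁻¹ * t⁻¹ := by
  have h1 : (Q * s * (-t * P))⁻¹ = -(Q⁻¹ * P⁻¹ * s⁻¹ * t⁻¹) := by
    simp only [mul_inv, inv_neg]; ring
  have h2 : (Q * (s - t) * P)⁻¹ = Q⁻¹ * (s - t)⁻¹ * P⁻¹ := by
    simp only [mul_inv]
  rw [h1, h2, ← mul_sub, inv_sub_inv hs ht,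
    show t - s = -(s - t) from by ring, neg_div, mul_neg, div_eq_mul_inv, mul_inv]
  have h3 : (s - t)⁻¹ * (s - t) = 1 := inv_mul_cancel₀ hst
  linear_combination (Q⁻¹ * P⁻¹ * s⁻¹ * t⁻¹) * h3

lemma field_key {F : Type*} [Field F] (Q P a b c : F)
    (hab : a - b ≠ 0) (hav : a - c ≠ 0) (hbv : b - c ≠ 0) :
    (Q * (a - c) * ((c - b) * P))⁻¹ =
      (Q * (a - b) * P)⁻¹ * (a - c)⁻¹ - (Q * (a - b) * P)⁻¹ * (b - c)⁻¹ := by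
  have h := field_key' Q P (a - c) (b - c)
    (by rw [show a - c - (b - c) = a - b from by ring]; exact hab) hav hbv
  rw [show a - c - (b - c) = a - b from by ring, show -(b - c) = c - b from by ring] at h
  exact h

lemma psi_insert {V : Type} [DecidableEq V] (w : List V) (v : V) (hv : v ∉ w)
    (hnd : w.Nodup) (k : ℕ) (hk1 : 1 ≤ k) (hkn : k < w.length)
    (h1 : k - 1 < w.length) :
    psi (w.take k ++ v :: w.drop k) =
      psi w * (xv w[k-1] - xv v)⁻¹ - psi w * (xv w[k] - xv v)⁻¹ := by
  set A := w.take k with hA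
  have hAlen : A.length = k := by simp [hA]; omega
  have hAne : A ≠ [] := by intro h; rw [h] at hAlen; simp at hAlen; omega
  have hdrop : w.drop k = w[k] :: w.drop (k+1) := List.drop_eq_getElem_cons hkn
  have hw : w = A ++ w[k] :: w.drop (k+1) := by
    rw [← hdrop, hA, List.take_append_drop]
  have hlast : A.getLast hAne = w[k-1] := by
    rw [List.getLast_eq_getElem, List.getElem_take]
    congr 1
    omega
  have e1 : prodw w = prodw A * (xv w[k-1] - xv w[k]) * prodw (w[k] :: w.drop (k+1)) := by
    conv_lhs => rw [hw]
    rw [prodw_split, prodw_append_singleton A hAne, hlast]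
  have e2 : prodw (w.take k ++ v :: w.drop k) =
      prodw A * (xv w[k-1] - xv v) * ((xv v - xv w[k]) * prodw (w[k] :: w.drop (k+1))) := by
    rw [hdrop, ← hA, prodw_split, prodw_append_singleton A hAne, hlast, prodw_cons_cons]
  have hwne : prodw w ≠ 0 := prodw_ne_zero hnd
  rw [e1] at hwne
  have hQ : prodw A ≠ 0 := fun h => hwne (by rw [h]; ring)
  have hP : prodw (w[k] :: w.drop (k+1)) ≠ 0 := fun h => hwne (by rw [h]; ring)
  have hab : xv w[k-1] - xv w[k] ≠ 0 := by
    refine xv_sub_ne_zero ?_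
    rw [Ne, List.Nodup.getElem_inj_iff hnd]
    omega
  have hav : xv w[k-1] - xv v ≠ 0 := xv_sub_ne_zero (by rintro rfl; exact hv (List.getElem_mem _))
  have hbv : xv w[k] - xv v ≠ 0 := xv_sub_ne_zero (by rintro rfl; exact hv (List.getElem_mem _))
  rw [psi_eq, psi_eq, e1, e2]
  exact field_key _ _ _ _ _ hab hav hbv


/-- telescoping identity.  For a word `w = w_1 … w_{n-1}` with distinct
letters, a new letter `v` and an index `1 ≤ k ≤ n-1`, the sum of `ψ_{w'}` over the
words obtained by inserting `v` after position `i`, `i = k, …, n-1`, equals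
`ψ_w / (x_{w_k} - x_v)`. -/
theorem sum_psi_insertions (V : Type) [DecidableEq V] (w : List V) (v : V)
    (hv : v ∉ w) (hnd : w.Nodup) (k : ℕ) (hk1 : 1 ≤ k) (hk2 : k ≤ w.length) :
    ∑ i ∈ Finset.Icc k w.length, psi (w.take i ++ v :: w.drop i) =
      psi w / (xv (w.get ⟨k - 1, by omega⟩) - xv v) := by
  have key : ∀ d k, 1 ≤ k → k ≤ w.length → w.length - k = d → ∀ (h : k - 1 < w.length),
      ∑ i ∈ Finset.Icc k w.length, psi (w.take i ++ v :: w.drop i) =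
        psi w / (xv w[k-1] - xv v) := by
    intro d
    induction d with
    | zero =>
      intro k hk1 hk2 hd h
      have hk : k = w.length := by omega
      subst hk
      have hwne : w ≠ [] := List.ne_nil_of_length_pos (by omega)
      rw [Finset.Icc_self, Finset.sum_singleton, List.take_length, List.drop_length]
      rw [psi_eq, psi_eq]
      rw [prodw_append_singleton w hwne]
      rw [List.getLast_eq_getElem]
      rw [mul_inv, div_eq_mul_inv]
    | succ d ih =>
      intro k hk1 hk2 hd h
      have hkn : k < w.length := by omega
      have hIcc : Finset.Icc k w.length = insert k (Finset.Icc (k+1) w.length) := by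
        ext x; simp only [Finset.mem_Icc, Finset.mem_insert]; omega
      rw [hIcc, Finset.sum_insert (by simp only [Finset.mem_Icc]; omega),
        ih (k+1) (by omega) (by omega) (by omega) (by omega),
        psi_insert w v hv hnd k hk1 hkn h]
      have : k + 1 - 1 = k := rfl
      simp only [this]
      rw [div_eq_mul_inv, div_eq_mul_inv]
      ring
  have := key (w.length - k) k hk1 hk2 rfl (by omega)
  simpa [List.get_eq_getElem] using this
end

section
/- For any finite directed graph G, N(G) is a polynomial in the variables x_v, v ∈ V(G). -/
open scoped BigOperators

/-!
Put `Δ = ∏_{a < b} (x_a - x_b)` for some linear order on the vertices. For every linear extension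
`w`, the product of the consecutive differences `x_{w_i} - x_{w_{i+1}}` divides `Δ`, so
`A = N(G) · Δ` is a polynomial, and since the `x_a - x_b` are pairwise non-associated primes it
suffices that each of them divides `A`. If `a` and `b` are joined by an edge, `x_a - x_b` already
divides the numerator `∏_E (x_u - x_v)`. Otherwise, after the substitution `x_a := x_b` the term of
every linear extension in which `a` and `b` are not neighbours vanishes, and exchanging `a` and `b`
is a sign-reversing involution on the remaining linear extensions, so `A` vanishes on `x_a = x_b`.
-/

open MvPolynomial Finset

theorem Function.update_id_eq_update_id_iff {α : Type*} [DecidableEq α] {a b u v : α}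
    (huv : u ≠ v) : Function.update id a b u = Function.update id a b v ↔ s(u, v) = s(a, b) := by
  simp only [Function.update_apply, id, Sym2.eq_iff]
  split_ifs <;> grind

theorem Function.update_id_swap_apply {α : Type*} [DecidableEq α] (a b v : α) :
    Function.update id a b (Equiv.swap a b v) = Function.update id a b v := by
  simp only [Function.update_apply, id, Equiv.swap_apply_def]
  split_ifs <;> grind

theorem Equiv.swap_eq_swap_of_sym2_eq {α : Type*} [DecidableEq α] {a b c d : α}
    (h : s(a, b) = s(c, d)) : Equiv.swap a b = Equiv.swap c d := by
  rcases Sym2.eq_iff.1 h with ⟨rfl, rfl⟩ | ⟨rfl, rfl⟩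
  exacts [rfl, Equiv.swap_comm _ _]

theorem Fin.swap_apply_lt_swap_apply {n : ℕ} {i j k l : Fin n} (hij : i.val + 1 = j.val)
    (hkl : k < l) (hne : ¬(k = i ∧ l = j)) : Equiv.swap i j k < Equiv.swap i j l := by
  simp only [Equiv.swap_apply_def]
  split_ifs <;> simp only [Fin.lt_def, Fin.ext_iff] at * <;> omega

theorem Finset.prod_dvd_of_prime_of_not_dvd {ι M : Type*} [CommMonoidWithZero M]
    [IsCancelMulZero M] {s : Finset ι} {f : ι → M} {n : M} (hprime : ∀ i ∈ s, Prime (f i))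
    (hndvd : ∀ i ∈ s, ∀ j ∈ s, f i ∣ f j → i = j) (hdvd : ∀ i ∈ s, f i ∣ n) :
    ∏ i ∈ s, f i ∣ n := by
  classical
  induction s using Finset.induction_on generalizing n with
  | empty => simp
  | insert i s hi ih =>
    obtain ⟨m, rfl⟩ := hdvd i (mem_insert_self i s)
    rw [prod_insert hi]
    refine mul_dvd_mul_left _ (ih (fun j hj => hprime j (mem_insert_of_mem hj))
      (fun j hj k hk => hndvd j (mem_insert_of_mem hj) k (mem_insert_of_mem hk)) fun j hj => ?_)
    have hj' : j ∈ insert i s := mem_insert_of_mem hj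
    refine ((hprime j hj').dvd_or_dvd (hdvd j hj')).resolve_left fun h => hi ?_
    exact hndvd j hj' i (mem_insert_self i s) h ▸ hj

namespace MvPolynomial

variable {σ R : Type*} [CommRing R] [DecidableEq σ]

theorem rename_update_id_X_sub_X_eq_zero {a b u v : σ} (h : s(u, v) = s(a, b)) :
    rename (Function.update id a b) (X u - X v : MvPolynomial σ R) = 0 := by
  rcases Sym2.eq_iff.1 h with ⟨rfl, rfl⟩ | ⟨rfl, rfl⟩ <;> simp [Function.update_apply]

theorem X_sub_X_dvd_iff_rename_update_id_eq_zero {a b : σ} {p : MvPolynomial σ R} :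
    X a - X b ∣ p ↔ rename (Function.update id a b) p = 0 := by
  constructor
  · rintro ⟨q, rfl⟩
    rw [map_mul, rename_update_id_X_sub_X_eq_zero rfl, zero_mul]
  intro h
  set I := Ideal.span {(X a - X b : MvPolynomial σ R)}
  -- substituting `x_a := x_b` does not change classes modulo `x_a - x_b`
  have hmk : (Ideal.Quotient.mk I).comp (rename (Function.update id a b)).toRingHom =
      Ideal.Quotient.mk I := by
    refine ringHom_ext (fun r => by simp) fun v => ?_
    rcases eq_or_ne v a with rfl | hv
    · simpa [Ideal.Quotient.eq, I, Ideal.mem_span_singleton] using ⟨-1, by ring⟩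
    · simp [hv]
  rw [← Ideal.mem_span_singleton, ← Ideal.Quotient.eq_zero_iff_mem, ← hmk]
  simp [h]

theorem prime_X_sub_X [IsDomain R] {a b : σ} (hab : a ≠ b) :
    Prime (X a - X b : MvPolynomial σ R) := by
  let shear : MvPolynomial σ R ≃ₐ[R] MvPolynomial σ R := AlgEquiv.ofAlgHom
    (aeval (Function.update X a (X a - X b))) (aeval (Function.update X a (X a + X b)))
    (algHom_ext fun v => by rcases eq_or_ne v a with rfl | hv <;> simp [*, hab.symm])
    (algHom_ext fun v => by rcases eq_or_ne v a with rfl | hv <;> simp [*, hab.symm])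
  have : shear (X a) = X a - X b := by simp [shear]
  rw [← this, MulEquiv.prime_iff shear]
  exact X_prime

theorem sym2_eq_of_X_sub_X_dvd [Nontrivial R] {a b c d : σ} (hcd : c ≠ d)
    (h : (X a - X b : MvPolynomial σ R) ∣ X c - X d) : s(c, d) = s(a, b) := by
  rw [X_sub_X_dvd_iff_rename_update_id_eq_zero, map_sub, rename_X, rename_X, sub_eq_zero] at h
  exact (Function.update_id_eq_update_id_iff hcd).1 (X_injective h)

theorem rename_update_id_prod_X_sub_X_ne_zero [IsDomain R] {ι : Type*} {T : Finset ι}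
    {f g : ι → σ} {a b : σ} (h : ∀ i ∈ T, f i ≠ g i ∧ s(f i, g i) ≠ s(a, b)) :
    rename (Function.update id a b) (∏ i ∈ T, (X (f i) - X (g i)) : MvPolynomial σ R) ≠ 0 := by
  rw [map_prod, prod_ne_zero_iff]
  intro i hi
  rw [map_sub, rename_X, rename_X, sub_ne_zero]
  exact fun hX => (h i hi).2 ((Function.update_id_eq_update_id_iff (h i hi).1).1 (X_injective hX))

end MvPolynomial

def consecutivePairs (n : ℕ) : Finset (Fin n × Fin n) := {ij | ij.1.val + 1 = ij.2.val}

theorem mem_consecutivePairs {n : ℕ} {ij : Fin n × Fin n} :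
    ij ∈ consecutivePairs n ↔ ij.1.val + 1 = ij.2.val := by
  simp only [consecutivePairs, mem_filter, mem_univ, true_and]

theorem ne_of_mem_consecutivePairs {n : ℕ} {ij : Fin n × Fin n} (h : ij ∈ consecutivePairs n) :
    ij.1 ≠ ij.2 := fun h' => by rw [mem_consecutivePairs, h'] at h; omega

theorem eq_of_mem_consecutivePairs {n : ℕ} {ij kl : Fin n × Fin n} (hij : ij ∈ consecutivePairs n)
    (hkl : kl ∈ consecutivePairs n) (h : s(kl.1, kl.2) = s(ij.1, ij.2)) : kl = ij := by
  rw [mem_consecutivePairs] at hij hkl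
  rcases Sym2.eq_iff.1 h with ⟨h1, h2⟩ | ⟨h1, h2⟩
  · exact Prod.ext h1 h2
  · rw [h1, h2] at hkl
    omega

theorem prod_consecutivePairs_add_two {M : Type*} [CommMonoid M] {n : ℕ}
    (f : Fin (n + 2) × Fin (n + 2) → M) :
    ∏ ij ∈ consecutivePairs (n + 2), f ij =
      f (0, 1) * ∏ ij ∈ consecutivePairs (n + 1), f (ij.1.succ, ij.2.succ) := by
  simp [consecutivePairs, prod_filter, Fintype.prod_prod_type, Fin.prod_univ_succ]

theorem prod_map_zip_tail_ofFn {α M : Type*} [CommMonoid M] (f : α × α → M) {n : ℕ}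
    (w : Fin n → α) :
    (((List.ofFn w).zip (List.ofFn w).tail).map f).prod =
      ∏ ij ∈ consecutivePairs n, f (w ij.1, w ij.2) := by
  induction n with
  | zero => simp [consecutivePairs]
  | succ n ih =>
    cases n with
    | zero => simp [consecutivePairs]
    | succ n =>
      rw [prod_consecutivePairs_add_two (fun ij => f (w ij.1, w ij.2)), ← ih fun i => w i.succ]
      simp [List.ofFn_succ]

section Words

variable {V : Type} {n : ℕ}

noncomputable def chainProd (w : Fin n → V) : MvPolynomial V ℚ :=
  ∏ ij ∈ consecutivePairs n, (X (w ij.1) - X (w ij.2))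

theorem psi_wordOf (W : Finset V) (σ : Fin W.card ≃ W) :
    psi (wordOf W σ) = (algebraMap (MvPolynomial V ℚ) (K V) (chainProd fun i => (σ i : V)))⁻¹ := by
  rw [psi, wordOf, ← List.ofFn_eq_map, prod_map_zip_tail_ofFn, chainProd, map_prod]
  simp [xv]

variable [Fintype V] [LinearOrder V]

variable (V) in
noncomputable def vandermonde : MvPolynomial V ℚ := ∏ p ∈ {p : V × V | p.1 < p.2}, (X p.1 - X p.2)

theorem vandermonde_ne_zero : vandermonde V ≠ 0 :=
  prod_ne_zero_iff.2 fun p hp => sub_ne_zero.2 (X_injective.ne (by simp at hp; exact hp.ne))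

theorem X_sub_X_dvd_vandermonde {a b : V} (hab : a ≠ b) : X a - X b ∣ vandermonde V := by
  rw [X_sub_X_dvd_iff_rename_update_id_eq_zero, vandermonde, map_prod]
  rcases hab.lt_or_gt with h | h
  · exact prod_eq_zero (i := (a, b)) (by simpa using h) (rename_update_id_X_sub_X_eq_zero rfl)
  · exact prod_eq_zero (i := (b, a)) (by simpa using h)
      (rename_update_id_X_sub_X_eq_zero Sym2.eq_swap)

theorem vandermonde_dvd {p : MvPolynomial V ℚ} (h : ∀ a b : V, a < b → X a - X b ∣ p) :
    vandermonde V ∣ p := by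
  refine prod_dvd_of_prime_of_not_dvd (fun q hq => prime_X_sub_X (by simp at hq; exact hq.ne))
    (fun q hq r hr hqr => ?_) fun q hq => h q.1 q.2 (by simpa using hq)
  simp only [mem_filter, mem_univ, true_and] at hq hr
  rcases Sym2.eq_iff.1 (sym2_eq_of_X_sub_X_dvd hr.ne hqr) with ⟨h1, h2⟩ | ⟨h1, h2⟩
  · exact Prod.ext h1.symm h2.symm
  · rw [h1, h2] at hr
    exact absurd (hq.trans hr) (lt_irrefl _)

theorem chainProd_dvd_vandermonde {w : Fin n → V} (hw : w.Injective) :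
    chainProd w ∣ vandermonde V := by
  have hne : ∀ ij ∈ consecutivePairs n, w ij.1 ≠ w ij.2 := fun ij hij =>
    hw.ne (ne_of_mem_consecutivePairs hij)
  refine prod_dvd_of_prime_of_not_dvd (fun ij hij => prime_X_sub_X (hne ij hij))
    (fun ij hij kl hkl h => (eq_of_mem_consecutivePairs hij hkl ?_).symm)
    fun ij hij => X_sub_X_dvd_vandermonde (hne ij hij)
  exact Sym2.map.injective hw (sym2_eq_of_X_sub_X_dvd (hne kl hkl) h)

noncomputable def cofactor (w : Fin n → V) : MvPolynomial V ℚ :=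
  Classical.epsilon fun B => chainProd w * B = vandermonde V

theorem chainProd_mul_cofactor {w : Fin n → V} (hw : w.Injective) :
    chainProd w * cofactor w = vandermonde V :=
  Classical.epsilon_spec ((chainProd_dvd_vandermonde hw).elim fun B hB => ⟨B, hB.symm⟩)

theorem rename_cofactor_eq_zero {w : Fin n → V} (hw : w.Injective) {a b : V} (hab : a ≠ b)
    (hsep : ∀ ij ∈ consecutivePairs n, s(w ij.1, w ij.2) ≠ s(a, b)) :
    rename (Function.update id a b) (cofactor w) = 0 := by
  have h := congrArg (rename (Function.update id a b)) (chainProd_mul_cofactor hw)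
  rw [map_mul, X_sub_X_dvd_iff_rename_update_id_eq_zero.1 (X_sub_X_dvd_vandermonde hab)] at h
  refine (mul_eq_zero.1 h).resolve_left (rename_update_id_prod_X_sub_X_ne_zero fun ij hij => ?_)
  exact ⟨hw.ne (ne_of_mem_consecutivePairs hij), hsep ij hij⟩

/-- Exchanging two neighbours `a, b` of the word flips the sign of the factor `x_a - x_b` of
`chainProd` and leaves the other factors unchanged once `x_a = x_b`. -/
theorem rename_cofactor_add_cofactor_swap {w : Fin n → V} (hw : w.Injective) {a b : V}
    {i j : Fin n} (hij : (i, j) ∈ consecutivePairs n) (hab : s(w i, w j) = s(a, b)) :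
    rename (Function.update id a b) (cofactor w + cofactor (Equiv.swap a b ∘ w)) = 0 := by
  set w' := Equiv.swap a b ∘ w
  have hw' : w'.Injective := (Equiv.injective _).comp hw
  have hswap : Equiv.swap a b = Equiv.swap (w i) (w j) := Equiv.swap_eq_swap_of_sym2_eq hab.symm
  have hi : w' i = w j := by show Equiv.swap a b (w i) = w j; rw [hswap, Equiv.swap_apply_left]
  have hj : w' j = w i := by show Equiv.swap a b (w j) = w i; rw [hswap, Equiv.swap_apply_right]
  have hne : w i ≠ w j := hw.ne (ne_of_mem_consecutivePairs hij)
  let rest (u : Fin n → V) : MvPolynomial V ℚ :=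
    ∏ kl ∈ (consecutivePairs n).erase (i, j), (X (u kl.1) - X (u kl.2))
  have hsplit (u : Fin n → V) : chainProd u = (X (u i) - X (u j)) * rest u := by
    rw [chainProd, ← mul_prod_erase _ _ hij]
  have hsum : rest w * cofactor w + rest w' * cofactor w' = 0 := by
    have key : (X (w i) - X (w j)) * (rest w * cofactor w + rest w' * cofactor w') = 0 := by
      have h1 := chainProd_mul_cofactor hw
      have h2 := chainProd_mul_cofactor hw'
      rw [hsplit] at h1 h2
      rw [hi, hj] at h2
      linear_combination h1 - h2
    exact (mul_eq_zero.1 key).resolve_left (sub_ne_zero.2 (X_injective.ne hne))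
  have hrest :
      rename (Function.update id a b) (rest w') = rename (Function.update id a b) (rest w) := by
    simp only [rest, w', Function.comp_apply, map_prod, map_sub, rename_X,
      Function.update_id_swap_apply]
  have hrest_ne : rename (Function.update id a b) (rest w) ≠ 0 := by
    refine rename_update_id_prod_X_sub_X_ne_zero fun kl hkl => ?_
    obtain ⟨hkl_ne, hkl⟩ := mem_erase.1 hkl
    refine ⟨hw.ne (ne_of_mem_consecutivePairs hkl),
      fun h => hkl_ne (eq_of_mem_consecutivePairs hij hkl ?_)⟩
    exact Sym2.map.injective hw (h.trans hab.symm)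
  have := congrArg (rename (Function.update id a b)) hsum
  rw [map_add, map_mul, map_mul, hrest, ← mul_add, map_zero] at this
  rw [map_add]
  exact (mul_eq_zero.1 this).resolve_left hrest_ne

end Words

abbrev Enumeration (V : Type) [Fintype V] : Type := Fin (univ : Finset V).card ≃ (univ : Finset V)

namespace Enumeration

variable {V : Type} [Fintype V]

def word (σ : Enumeration V) : Fin (univ : Finset V).card → V := fun i => σ i

theorem word_injective (σ : Enumeration V) : σ.word.Injective :=
  Subtype.val_injective.comp σ.injective

variable [DecidableEq V] {E : Finset (V × V)} {a b : V}

def swapValues (σ : Enumeration V) (a b : V) : Enumeration V :=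
  σ.trans (Equiv.swap ⟨a, mem_univ a⟩ ⟨b, mem_univ b⟩)

theorem word_swapValues (σ : Enumeration V) (a b : V) :
    (σ.swapValues a b).word = Equiv.swap a b ∘ σ.word :=
  funext fun i => Subtype.val_injective.map_swap _ _ (σ i)

theorem swapValues_swapValues (σ : Enumeration V) (a b : V) :
    (σ.swapValues a b).swapValues a b = σ := by
  ext i
  simp only [swapValues, Equiv.trans_apply, Equiv.swap_apply_self]

theorem swapValues_ne (σ : Enumeration V) (hab : a ≠ b) : σ.swapValues a b ≠ σ := by
  intro h
  have := congrArg (fun τ : Enumeration V => (τ (σ.symm ⟨a, mem_univ a⟩) : V)) h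
  simp only [swapValues, Equiv.trans_apply, Equiv.apply_symm_apply, Equiv.swap_apply_left] at this
  exact hab this.symm

def Adjacent (σ : Enumeration V) (a b : V) : Prop :=
  ∃ ij ∈ consecutivePairs (univ : Finset V).card, s(σ.word ij.1, σ.word ij.2) = s(a, b)

theorem Adjacent.swapValues {σ : Enumeration V} (h : σ.Adjacent a b) :
    (σ.swapValues a b).Adjacent a b := by
  obtain ⟨ij, hij, hab⟩ := h
  refine ⟨ij, hij, ?_⟩
  rw [word_swapValues, Function.comp_apply, Function.comp_apply, ← Sym2.map_mk, hab]
  simp [Sym2.eq_swap]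

/-- An edge between two neighbours `a, b` of `σ` is the only constraint that exchanging them can
break. -/
theorem isExt_swapValues {σ : Enumeration V} (hE : (a, b) ∉ E) (hE' : (b, a) ∉ E)
    (h : σ.Adjacent a b) (hσ : IsExt univ E σ) : IsExt univ E (σ.swapValues a b) := by
  obtain ⟨⟨i, j⟩, hij, hab⟩ := h
  dsimp only at hij hab
  have hword (m) : (σ.swapValues a b).word (Equiv.swap i j m) = σ.word m := by
    rw [word_swapValues, Function.comp_apply, σ.word_injective.map_swap,
      Equiv.swap_eq_swap_of_sym2_eq hab, Equiv.swap_apply_self]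
  intro e he
  obtain ⟨k, l, hkl, hk, hl⟩ := hσ e he
  have hne : ¬(k = i ∧ l = j) := by
    rintro ⟨rfl, rfl⟩
    have he' : (σ.word k, σ.word l) ∈ E := by
      rwa [show (σ.word k, σ.word l) = e from Prod.ext hk hl]
    rcases Sym2.eq_iff.1 hab with ⟨h1, h2⟩ | ⟨h1, h2⟩
    · exact hE (h1 ▸ h2 ▸ he')
    · exact hE' (h1 ▸ h2 ▸ he')
  exact ⟨Equiv.swap i j k, Equiv.swap i j l,
    Fin.swap_apply_lt_swap_apply (mem_consecutivePairs.1 hij) hkl hne,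
    (hword k).trans hk, (hword l).trans hl⟩

end Enumeration

section ScaledNG

open Enumeration

variable {V : Type} [Fintype V] [LinearOrder V] (E : Finset (V × V))

noncomputable def extensionTerm (σ : Enumeration V) : MvPolynomial V ℚ :=
  if IsExt univ E σ then (∏ e ∈ E, (X e.1 - X e.2)) * cofactor σ.word else 0

noncomputable def scaledNG : MvPolynomial V ℚ := ∑ σ : Enumeration V, extensionTerm E σ

theorem algebraMap_scaledNG :
    algebraMap (MvPolynomial V ℚ) (K V) (scaledNG E) =
      NG univ E * algebraMap (MvPolynomial V ℚ) (K V) (vandermonde V) := by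
  rw [NG, PsiG, sum_mul, sum_mul, scaledNG, map_sum]
  refine sum_congr rfl fun σ _ => ?_
  rw [extensionTerm]
  split_ifs with hσ
  · have hchain := chainProd_mul_cofactor σ.word_injective
    have hne : algebraMap (MvPolynomial V ℚ) (K V) (chainProd σ.word) ≠ 0 :=
      (map_ne_zero_iff _ (IsFractionRing.injective _ _)).2
        (left_ne_zero_of_mul (hchain ▸ vandermonde_ne_zero))
    rw [psi_wordOf, ← hchain, map_mul, map_mul, map_prod]
    change _ = (algebraMap _ _ (chainProd σ.word))⁻¹ * _ * _
    field_simp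
    simp only [map_sub, xv]
    ring
  · simp

variable {E} {a b : V}

theorem rename_extensionTerm_of_not_adjacent {σ : Enumeration V} (hab : a ≠ b)
    (h : ¬σ.Adjacent a b) : rename (Function.update id a b) (extensionTerm E σ) = 0 := by
  rw [extensionTerm]
  split_ifs
  · rw [map_mul, rename_cofactor_eq_zero σ.word_injective hab fun ij hij h' => h ⟨ij, hij, h'⟩,
      mul_zero]
  · exact map_zero _

theorem rename_extensionTerm_add_swapValues {σ : Enumeration V} (hE : (a, b) ∉ E)
    (hE' : (b, a) ∉ E) (h : σ.Adjacent a b) :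
    rename (Function.update id a b)
      (extensionTerm E σ + extensionTerm E (σ.swapValues a b)) = 0 := by
  have hext : IsExt univ E (σ.swapValues a b) ↔ IsExt univ E σ :=
    ⟨fun h' => σ.swapValues_swapValues a b ▸ isExt_swapValues hE hE' h.swapValues h',
      isExt_swapValues hE hE' h⟩
  simp only [extensionTerm, hext]
  split_ifs
  · obtain ⟨⟨i, j⟩, hij, hab⟩ := h
    rw [← mul_add, map_mul, word_swapValues,
      rename_cofactor_add_cofactor_swap σ.word_injective hij hab, mul_zero]
  · simp

theorem rename_scaledNG_eq_zero (hab : a ≠ b) (hE : (a, b) ∉ E) (hE' : (b, a) ∉ E) :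
    rename (Function.update id a b) (scaledNG E) = 0 := by
  classical
  rw [scaledNG, map_sum, ← sum_filter_add_sum_filter_not univ fun σ => σ.Adjacent a b,
    sum_eq_zero (s := filter _ _) fun σ hσ =>
      rename_extensionTerm_of_not_adjacent hab (mem_filter.1 hσ).2, add_zero]
  refine sum_involution (fun σ _ => σ.swapValues a b)
    (fun σ hσ => ?_) (fun σ _ _ => σ.swapValues_ne hab)
    (fun σ hσ => mem_filter.2 ⟨mem_univ _, (mem_filter.1 hσ).2.swapValues⟩)
    fun σ _ => σ.swapValues_swapValues a b
  rw [← map_add]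
  exact rename_extensionTerm_add_swapValues hE hE' (mem_filter.1 hσ).2

theorem X_sub_X_dvd_scaledNG (hab : a ≠ b) : X a - X b ∣ scaledNG E := by
  by_cases hE : (a, b) ∈ E ∨ (b, a) ∈ E
  · refine dvd_sum fun σ _ => ?_
    rw [extensionTerm]
    split_ifs
    · refine dvd_mul_of_dvd_left (X_sub_X_dvd_iff_rename_update_id_eq_zero.2 ?_) _
      rw [map_prod]
      rcases hE with hE | hE
      · exact prod_eq_zero hE (rename_update_id_X_sub_X_eq_zero rfl)
      · exact prod_eq_zero hE (rename_update_id_X_sub_X_eq_zero Sym2.eq_swap)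
    · exact dvd_zero _
  · rw [not_or] at hE
    exact X_sub_X_dvd_iff_rename_update_id_eq_zero.2 (rename_scaledNG_eq_zero hab hE.1 hE.2)

end ScaledNG

/-- for any finite directed graph, `N(G)` is a polynomial in the
variables `x_v`, `v ∈ V(G)`. -/
theorem NG_is_polynomial (V : Type) [Fintype V] [DecidableEq V] (E : Finset (V × V)) :
    ∃ p : MvPolynomial V ℚ,
      NG (Finset.univ : Finset V) E = algebraMap (MvPolynomial V ℚ) (K V) p := by
  let : LinearOrder V := LinearOrder.lift' _ (Fintype.equivFin V).injective
  obtain ⟨p, hp⟩ := vandermonde_dvd fun a b hab => X_sub_X_dvd_scaledNG (E := E) hab.ne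
  refine ⟨p, ?_⟩
  have hΔ : algebraMap (MvPolynomial V ℚ) (K V) (vandermonde V) ≠ 0 :=
    (map_ne_zero_iff _ (IsFractionRing.injective _ _)).2 vandermonde_ne_zero
  have := algebraMap_scaledNG E
  rw [hp, map_mul, mul_comm] at this
  -- `convert` identifies the given `DecidableEq V` with the one of the chosen order
  convert (mul_right_cancel₀ hΔ this).symm
end
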